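/- Let α > 0, λ > 0 and t ≥ 0. Then (1/Γ(α)) ∫₀ᵗ (t−τ)^{α−1} τ E_{α,2}(−λ τ^α) dτ = t λ^{−1}(1 − E_{α,2}(−λ t^α)); that is, I^α applied to τ ↦ τ E_{α,2}(−λ τ^α) equals t λ^{−1}(1 − E_{α,2}(−λ t^α)). -/

import Mathlib

/-!
Expanding the Mittag-Leffler function and integrating termwise, every term is a Beta integral,
`I^α[τ^(αk+β-1)](t) = Γ(αk+β)/Γ(αk+α+β) t^(αk+α+β-1)`, so that
`I^α[τ^(β-1) E_{α,β}(cτ^α)](t) = t^(α+β-1) E_{α,α+β}(ct^α)`. Termwise integration is justified by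
absolute convergence, which comes from the ratio test and the growth `Γ(s+α) ≥ (s-1)^α Γ(s)`
given by the log-convexity of `Γ`. For `β = 2` the recurrence
`E_{α,β}(z) = 1/Γ(β) + z E_{α,α+β}(z)` turns `t^(α+1) E_{α,α+2}(-λt^α)` into
`t λ⁻¹ (1 - E_{α,2}(-λt^α))`.
-/

/-- The Mittag-Leffler function `E_{α,β}(z) = ∑_{k=0}^∞ z^k / Γ(αk+β)`.
(In Lean, `Real.Gamma` vanishes at the poles of `Γ`, and division by zero is zero,
so the summand is interpreted as `0` there.) -/
noncomputable def mittagLeffler (α β z : ℝ) : ℝ :=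
  ∑' k : ℕ, z ^ k / Real.Gamma (α * k + β)

open Real MeasureTheory Filter Set

noncomputable def riemannLiouvilleIntegral (α : ℝ) (φ : ℝ → ℝ) (t : ℝ) : ℝ :=
  1 / Gamma α * ∫ τ in (0:ℝ)..t, (t - τ) ^ (α - 1) * φ τ

theorem Real.rpow_mul_Gamma_le_Gamma_add {s a : ℝ} (hs : 1 < s) (ha : 0 < a) :
    (s - 1) ^ a * Gamma s ≤ Gamma (s + a) := by
  have hs₁ : 0 < s - 1 := by linarith
  have hΓs : 0 < Gamma s := Gamma_pos_of_pos (by linarith)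
  have hrec : Gamma s = (s - 1) * Gamma (s - 1) := by
    simpa using Gamma_add_one (s := s - 1) hs₁.ne'
  -- slopes of `log ∘ Gamma` on `[s-1, s]` and `[s, s+a]`; the first one is `log (s-1)`
  have hslope := convexOn_log_Gamma.slope_mono_adjacent (x := s - 1) (y := s) (z := s + a)
    hs₁ (by simp only [mem_Ioi]; linarith) (by linarith) (by linarith)
  have hlog : log (Gamma s) = log (s - 1) + log (Gamma (s - 1)) := by
    rw [hrec, log_mul hs₁.ne' (Gamma_pos_of_pos hs₁).ne']
  simp only [Function.comp_apply] at hslope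
  rw [hlog, add_sub_cancel_right, sub_sub_cancel, div_one, add_sub_cancel_left,
    le_div_iff₀ ha] at hslope
  calc (s - 1) ^ a * Gamma s = exp (log (s - 1) * a + log (Gamma s)) := by
        rw [exp_add, rpow_def_of_pos hs₁, exp_log hΓs]
    _ ≤ exp (log (Gamma (s + a))) := exp_le_exp.2 (by linarith)
    _ = Gamma (s + a) := exp_log (Gamma_pos_of_pos (by linarith))

theorem summable_mittagLeffler {α : ℝ} (hα : 0 < α) (β z : ℝ) :
    Summable fun k : ℕ => z ^ k / Gamma (α * k + β) := by
  have hbase : Tendsto (fun k : ℕ => α * k + β - 1) atTop atTop :=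
    (tendsto_atTop_add_const_right _ (β - 1)
      (tendsto_natCast_atTop_atTop.const_mul_atTop hα)).congr fun k => by ring
  refine summable_of_ratio_norm_eventually_le (r := 1 / 2) (by norm_num) ?_
  filter_upwards [hbase.eventually_gt_atTop 0,
    ((tendsto_rpow_atTop hα).comp hbase).eventually_ge_atTop (2 * ‖z‖)] with k hpos hbig
  have hΓ : 0 < Gamma (α * k + β) := Gamma_pos_of_pos (by linarith)
  have hgrowth : 2 * ‖z‖ * Gamma (α * k + β) ≤ Gamma (α * ↑(k + 1) + β) :=
    calc 2 * ‖z‖ * Gamma (α * k + β) ≤ (α * k + β - 1) ^ α * Gamma (α * k + β) := by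
          gcongr; exact hbig
      _ ≤ Gamma (α * k + β + α) := rpow_mul_Gamma_le_Gamma_add (by linarith) hα
      _ = Gamma (α * ↑(k + 1) + β) := by push_cast; ring_nf
  have hΓ' : 0 < Gamma (α * ↑(k + 1) + β) := Gamma_pos_of_pos (by push_cast; linarith)
  rw [norm_div, norm_div, norm_pow, norm_pow, norm_of_nonneg hΓ.le, norm_of_nonneg hΓ'.le,
    div_le_iff₀ hΓ']
  calc ‖z‖ ^ (k + 1) = 1 / 2 * (‖z‖ ^ k / Gamma (α * k + β)) * (2 * ‖z‖ * Gamma (α * k + β)) := by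
        field_simp; ring
    _ ≤ 1 / 2 * (‖z‖ ^ k / Gamma (α * k + β)) * Gamma (α * ↑(k + 1) + β) := by gcongr

theorem mittagLeffler_eq_inv_Gamma_add_mul {α : ℝ} (hα : 0 < α) (β z : ℝ) :
    mittagLeffler α β z = (Gamma β)⁻¹ + z * mittagLeffler α (α + β) z := by
  rw [mittagLeffler, (summable_mittagLeffler hα β z).tsum_eq_zero_add, mittagLeffler,
    ← tsum_mul_left]
  simp only [pow_zero, Nat.cast_zero, mul_zero, zero_add, one_div, Nat.cast_succ]
  congr 1
  refine tsum_congr fun k => ?_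
  rw [pow_succ', mul_div_assoc]
  ring_nf

theorem rpow_mul_mittagLeffler_mul_rpow {τ : ℝ} (hτ : 0 < τ) (α β c : ℝ) :
    τ ^ (β - 1) * mittagLeffler α β (c * τ ^ α)
      = ∑' k : ℕ, c ^ k / Gamma (α * k + β) * τ ^ (α * k + β - 1) := by
  rw [mittagLeffler, ← tsum_mul_left]
  refine tsum_congr fun k => ?_
  rw [mul_pow, ← rpow_natCast (τ ^ α), ← rpow_mul hτ.le, add_sub_assoc, rpow_add hτ]
  ring

theorem integral_sub_rpow_mul_rpow {a b t : ℝ} (ha : 0 < a) (hb : 0 < b) (ht : 0 < t) :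
    ∫ τ in (0:ℝ)..t, (t - τ) ^ (a - 1) * τ ^ (b - 1)
      = Gamma a * Gamma b / Gamma (a + b) * t ^ (a + b - 1) := by
  have hbeta := Complex.betaIntegral_scaled b a ht
  rw [Complex.betaIntegral_eq_Gamma_mul_div _ _ (by simpa) (by simpa)] at hbeta
  apply Complex.ofReal_injective
  rw [← intervalIntegral.integral_ofReal]
  have hcast : ∫ τ in (0:ℝ)..t, (((t - τ) ^ (a - 1) * τ ^ (b - 1) : ℝ) : ℂ)
      = ∫ τ in (0:ℝ)..t, (τ : ℂ) ^ ((b : ℂ) - 1) * ((t : ℂ) - τ) ^ ((a : ℂ) - 1) := by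
    refine intervalIntegral.integral_congr fun τ hτ => ?_
    rw [uIcc_of_le ht.le] at hτ
    rw [Complex.ofReal_mul, Complex.ofReal_cpow (sub_nonneg.2 hτ.2),
      Complex.ofReal_cpow hτ.1, mul_comm]
    push_cast
    rfl
  rw [hcast, hbeta]
  push_cast [Complex.ofReal_cpow ht.le, ← Complex.Gamma_ofReal]
  ring_nf

theorem intervalIntegrable_sub_rpow_mul_rpow {a b t : ℝ} (ha : 0 < a) (hb : 0 < b)
    (ht : 0 < t) : IntervalIntegrable (fun τ => (t - τ) ^ (a - 1) * τ ^ (b - 1)) volume 0 t := by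
  have hleft : IntervalIntegrable (fun τ : ℝ => τ ^ (b - 1)) volume 0 (t / 2) :=
    intervalIntegral.intervalIntegrable_rpow' (by linarith)
  have hright : IntervalIntegrable (fun τ : ℝ => (t - τ) ^ (a - 1)) volume (t / 2) t := by
    simpa [show t - t / 2 = t / 2 by ring] using
      ((intervalIntegral.intervalIntegrable_rpow' (a := 0) (b := t / 2)
        (by linarith : -1 < a - 1)).comp_sub_left t).symm
  refine (hleft.continuousOn_mul ?_).trans (hright.mul_continuousOn ?_)
  · refine ContinuousOn.rpow_const (by fun_prop) fun τ hτ => Or.inl ?_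
    rw [uIcc_of_le (by linarith)] at hτ
    linarith [hτ.2]
  · refine ContinuousOn.rpow_const (by fun_prop) fun τ hτ => Or.inl ?_
    rw [uIcc_of_le (by linarith)] at hτ
    linarith [hτ.1]

theorem riemannLiouvilleIntegral_rpow_mul_mittagLeffler {α β t : ℝ} (hα : 0 < α) (hβ : 0 < β)
    (ht : 0 < t) (c : ℝ) :
    riemannLiouvilleIntegral α (fun τ => τ ^ (β - 1) * mittagLeffler α β (c * τ ^ α)) t
      = t ^ (α + β - 1) * mittagLeffler α (α + β) (c * t ^ α) := by
  set F : ℕ → ℝ → ℝ :=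
    fun k τ => c ^ k / Gamma (α * k + β) * ((t - τ) ^ (α - 1) * τ ^ (α * k + β - 1))
  have hpos (k : ℕ) : 0 < α * k + β := by positivity
  have hΓ (k : ℕ) : 0 < Gamma (α * k + β) := Gamma_pos_of_pos (hpos k)
  have hterm (c' : ℝ) (k : ℕ) :
      ∫ τ in (0:ℝ)..t, c' ^ k / Gamma (α * k + β) * ((t - τ) ^ (α - 1) * τ ^ (α * k + β - 1))
        = Gamma α * t ^ (α + β - 1) * ((c' * t ^ α) ^ k / Gamma (α * k + (α + β))) := by
    rw [intervalIntegral.integral_const_mul, integral_sub_rpow_mul_rpow hα (hpos k) ht,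
      show α + (α * k + β) = α * k + (α + β) by ring,
      show α * k + (α + β) - 1 = (α + β - 1) + α * k by ring,
      rpow_add ht, rpow_mul ht.le, rpow_natCast, mul_pow]
    field_simp [(hΓ k).ne']
  have hF_int (k : ℕ) : Integrable (F k) (volume.restrict (Ioc 0 t)) :=
    ((intervalIntegrable_sub_rpow_mul_rpow hα (by positivity) ht).const_mul _).1
  have hF_norm (k : ℕ) : ∫ τ in Ioc 0 t, ‖F k τ‖
      = Gamma α * t ^ (α + β - 1) * ((|c| * t ^ α) ^ k / Gamma (α * k + (α + β))) := by
    rw [← hterm, intervalIntegral.integral_of_le ht.le]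
    refine setIntegral_congr_fun measurableSet_Ioc fun τ hτ => ?_
    have h₁ : 0 ≤ (t - τ) ^ (α - 1) := rpow_nonneg (by linarith [hτ.2]) _
    have h₂ : 0 ≤ τ ^ (α * k + β - 1) := rpow_nonneg hτ.1.le _
    simp only [F, norm_mul, norm_div, norm_pow, norm_of_nonneg (hΓ k).le, norm_of_nonneg h₁,
      norm_of_nonneg h₂, norm_eq_abs]
  have hF_sum : Summable fun k => ∫ τ in Ioc 0 t, ‖F k τ‖ := by
    simpa only [hF_norm] using (summable_mittagLeffler hα _ _).mul_left _
  have hseries : ∀ τ ∈ Ioc 0 t,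
      (t - τ) ^ (α - 1) * (τ ^ (β - 1) * mittagLeffler α β (c * τ ^ α)) = ∑' k, F k τ := by
    intro τ hτ
    rw [rpow_mul_mittagLeffler_mul_rpow hτ.1, ← tsum_mul_left]
    exact tsum_congr fun k => by ring
  rw [riemannLiouvilleIntegral, intervalIntegral.integral_of_le ht.le,
    setIntegral_congr_fun measurableSet_Ioc hseries,
    ← integral_tsum_of_summable_integral_norm hF_int hF_sum]
  simp only [F, ← intervalIntegral.integral_of_le ht.le, hterm, tsum_mul_left, mittagLeffler]
  field_simp [(Gamma_pos_of_pos hα).ne']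

/-- For `α > 0`, `λ > 0` and `t ≥ 0`,
`(1/Γ(α)) ∫₀ᵗ (t−τ)^{α−1} τ E_{α,2}(−λ τ^α) dτ = t λ⁻¹ (1 − E_{α,2}(−λ t^α))`. -/
theorem RL_integral_mittagLeffler_two (α lam t : ℝ) (hα : 0 < α) (hlam : 0 < lam)
    (ht : 0 ≤ t) :
    (1 / Real.Gamma α) *
        ∫ τ in (0:ℝ)..t, (t - τ) ^ (α - 1) * (τ * mittagLeffler α 2 (-(lam * τ ^ α)))
      = t * lam⁻¹ * (1 - mittagLeffler α 2 (-(lam * t ^ α))) := by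
  rcases ht.eq_or_lt with rfl | ht
  · simp
  have hRL := riemannLiouvilleIntegral_rpow_mul_mittagLeffler hα two_pos ht (-lam)
  norm_num only [riemannLiouvilleIntegral, neg_mul, rpow_one] at hRL
  rw [hRL, mittagLeffler_eq_inv_Gamma_add_mul hα 2, Gamma_two, show α + 2 - 1 = α + 1 by ring,
    rpow_add_one ht.ne']
  field_simp
  ring
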